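/- Let 0 < s < 1 and μ > 0 be real numbers. Then the integrand below is Lebesgue integrable on (0,∞), and (1−s) · ∫₀^∞ (1 − e^{−μt} · cosh t · (t/sinh t)^{2−s}) · t^{s−2} dt = 2^{−s} · μ · Γ(s) · Γ((μ+1−s)/2) / Γ((μ+1+s)/2). -/

import Mathlib

/-!
Put `F t = e^{-μt} sinh^{s-1} t - t^{s-1}`. Then
`F' = (1 - s) (1 - e^{-μt} cosh t (t / sinh t)^{2-s}) t^{s-2} - μ e^{-μt} sinh^{s-1} t`,
and `F` vanishes at `0` (because `t / sinh t = 1 + O(t²)`) and at `∞`, so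
`(1 - s) ∫₀^∞ (…) = μ ∫₀^∞ e^{-μt} sinh^{s-1} t dt`. Writing
`sinh t = e^t (1 - e^{-2t}) / 2` and substituting `x = e^{-2t}` turns the last integral into
`2^{-s} B((μ + 1 - s)/2, s)`.
-/

open MeasureTheory Real Set Filter Topology

noncomputable section

namespace Real

lemma sinh_le_mul_cosh {t : ℝ} (ht : 0 ≤ t) : sinh t ≤ t * cosh t := by
  have hmono : MonotoneOn (fun x => x * cosh x - sinh x) (Ici 0) := by
    refine monotoneOn_of_hasDerivWithinAt_nonneg (f' := fun x => x * sinh x) (convex_Ici 0)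
      (by fun_prop) (fun x _ => ?_) fun x hx => ?_
    · have := ((hasDerivAt_id x).mul (hasDerivAt_cosh x)).sub (hasDerivAt_sinh x)
      exact (this.congr_deriv (by simp)).hasDerivWithinAt
    · rw [interior_Ici] at hx
      exact mul_nonneg (le_of_lt hx) (sinh_nonneg_iff.2 (le_of_lt hx))
  simpa using hmono self_mem_Ici ht ht

lemma cosh_sub_one_le_sq {t : ℝ} (ht : |t| ≤ 1) : cosh t - 1 ≤ t ^ 2 := by
  have hsq : |t ^ 2 / 2| ≤ 1 := by
    rw [abs_of_nonneg (by positivity)]; nlinarith [sq_abs t, abs_nonneg t]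
  have := (abs_le.1 (abs_exp_sub_one_le hsq)).2
  rw [abs_of_nonneg (by positivity)] at this
  linarith [cosh_le_exp_half_sq t]

lemma cosh_le_two_mul_sinh {t : ℝ} (ht : 1 ≤ t) : cosh t ≤ 2 * sinh t := by
  have h1 : exp (-t) ≤ 1 := exp_le_one_iff.2 (by linarith)
  have h2 : t ≤ sinh t := self_le_sinh_iff.2 (by linarith)
  linarith [cosh_sub_sinh t]

lemma div_sinh_le_one {t : ℝ} (ht : 0 ≤ t) : t / sinh t ≤ 1 :=
  div_le_one_of_le₀ (self_le_sinh_iff.2 ht) (sinh_nonneg_iff.2 ht)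

lemma one_sub_sq_le_div_sinh_rpow {t p : ℝ} (ht : 0 < t) (hp0 : 0 ≤ p) (hp2 : p ≤ 2) :
    1 - t ^ 2 ≤ (t / sinh t) ^ p := by
  have hsinh : 0 < sinh t := sinh_pos_iff.2 ht
  have hsq : 1 - t ^ 2 ≤ (t / sinh t) ^ (2 : ℝ) := by
    rw [rpow_two, div_pow, le_div_iff₀ (by positivity)]
    nlinarith [sinh_le_mul_cosh ht.le, cosh_sq t, cosh_pos t]
  exact hsq.trans
    (rpow_le_rpow_of_exponent_ge' (by positivity) (div_sinh_le_one ht.le) hp0 hp2)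

lemma sinh_rpow_eq_div_sinh_rpow_mul {t : ℝ} (ht : 0 < t) (q : ℝ) :
    sinh t ^ q = (t / sinh t) ^ (-q) * t ^ q := by
  have hsinh : 0 < sinh t := sinh_pos_iff.2 ht
  rw [div_rpow ht.le hsinh.le, rpow_neg ht.le, rpow_neg hsinh.le]
  field_simp

lemma sinh_rpow_eq_exp_mul {t : ℝ} (ht : 0 ≤ t) (b : ℝ) :
    sinh t ^ b = 2 ^ (-b) * exp (b * t) * (1 - exp (-2 * t)) ^ b := by
  have hsinh : sinh t = exp t * (1 - exp (-2 * t)) / 2 := by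
    rw [sinh_eq, mul_one_sub, ← exp_add]; ring_nf
  have h1 : 0 ≤ 1 - exp (-2 * t) := sub_nonneg.2 (exp_le_one_iff.2 (by linarith))
  rw [hsinh, div_rpow (by positivity) zero_le_two, mul_rpow (exp_pos t).le h1, ← exp_mul,
    rpow_neg zero_le_two, mul_comm t b]
  ring

lemma integral_rpow_mul_one_sub_rpow {a b : ℝ} (ha : 0 < a) (hb : 0 < b) :
    ∫ x in Ioo 0 1, x ^ (a - 1) * (1 - x) ^ (b - 1) = Gamma a * Gamma b / Gamma (a + b) := by
  have hconv := Complex.betaIntegral_convergent (u := a) (v := b) (by simpa) (by simpa)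
  rw [← ProbabilityTheory.beta, ProbabilityTheory.beta_eq_betaIntegralReal a b ha hb,
    Complex.betaIntegral, intervalIntegral.integral_of_le zero_le_one,
    ← integral_Ioc_eq_integral_Ioo, ← RCLike.re_to_complex,
    ← integral_re ((intervalIntegrable_iff_integrableOn_Ioc_of_le zero_le_one).1 hconv)]
  refine setIntegral_congr_fun measurableSet_Ioc fun x ⟨hx0, hx1⟩ => ?_
  norm_cast
  rw [← Complex.ofReal_cpow hx0.le, ← Complex.ofReal_cpow (by linarith), RCLike.re_to_complex,
    ← Complex.ofReal_mul, Complex.ofReal_re]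

end Real

lemma abs_one_sub_mul_mul_le {ε δ e c r : ℝ} (he0 : 0 ≤ e) (he1 : e ≤ 1) (he : 1 - ε ≤ e)
    (hc1 : 1 ≤ c) (hc : c ≤ 1 + δ) (hr0 : 0 ≤ r) (hr1 : r ≤ 1) (hr : 1 - δ ≤ r) :
    |1 - e * c * r| ≤ ε + δ := by
  rw [abs_le]
  constructor <;> nlinarith [mul_nonneg he0 hr0, mul_le_one₀ he1 hr0 hr1]

lemma abs_one_sub_exp_mul_mul_div_sinh_rpow_le {μ c p t : ℝ} (hμ : 0 ≤ μ) (ht0 : 0 < t)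
    (ht1 : t ≤ 1) (hc1 : 1 ≤ c) (hc : c ≤ 1 + t ^ 2) (hp0 : 0 ≤ p) (hp2 : p ≤ 2) :
    |1 - exp (-μ * t) * c * (t / sinh t) ^ p| ≤ (μ + 1) * t := by
  have hexp : 1 - μ * t ≤ exp (-μ * t) := by rw [neg_mul]; exact one_sub_le_exp_neg _
  have hbound := abs_one_sub_mul_mul_le (exp_pos _).le (exp_le_one_iff.2 (by nlinarith)) hexp
    hc1 hc (by positivity) (rpow_le_one (by positivity) (div_sinh_le_one ht0.le) hp0)
    (one_sub_sq_le_div_sinh_rpow ht0 hp0 hp2)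
  nlinarith

lemma integrableOn_Ioi_zero_of_norm_le {E : Type*} [NormedAddCommGroup E] {f : ℝ → E}
    {g : ℝ → ℝ} {s C : ℝ} (hs : 0 < s) (hf : AEStronglyMeasurable f)
    (h₀ : ∀ t ∈ Ioc 0 1, ‖f t‖ ≤ C * t ^ (s - 1)) (hg : IntegrableOn g (Ioi 1))
    (h₁ : ∀ t ∈ Ioi 1, ‖f t‖ ≤ g t) : IntegrableOn f (Ioi 0) := by
  rw [← Ioc_union_Ioi_eq_Ioi zero_le_one]
  refine IntegrableOn.union ?_ ?_
  · refine Integrable.mono' ((intervalIntegral.intervalIntegrable_rpow' ?_).1.const_mul C)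
      hf.restrict ((ae_restrict_iff' measurableSet_Ioc).2 (Eventually.of_forall h₀))
    linarith
  · exact Integrable.mono' hg hf.restrict ((ae_restrict_iff' measurableSet_Ioi).2
      (Eventually.of_forall h₁))

def subordinationIntegrand (s μ t : ℝ) : ℝ :=
  (1 - exp (-μ * t) * cosh t * (t / sinh t) ^ (2 - s)) * t ^ (s - 2)

section SubordinationIntegrand
variable {s μ t : ℝ}

lemma subordinationIntegrand_eq (ht : 0 < t) :
    subordinationIntegrand s μ t = t ^ (s - 2) - exp (-μ * t) * cosh t * sinh t ^ (s - 2) := by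
  rw [subordinationIntegrand, sinh_rpow_eq_div_sinh_rpow_mul ht, neg_sub]
  ring

lemma abs_subordinationIntegrand_le (hs0 : 0 ≤ s) (hs2 : s ≤ 2) (hμ : 0 ≤ μ) (ht0 : 0 < t)
    (ht1 : t ≤ 1) : |subordinationIntegrand s μ t| ≤ (μ + 1) * t ^ (s - 1) := by
  have hcosh : cosh t ≤ 1 + t ^ 2 := by
    linarith [cosh_sub_one_le_sq (abs_le.2 ⟨by linarith, ht1⟩)]
  have h := abs_one_sub_exp_mul_mul_div_sinh_rpow_le hμ ht0 ht1 (one_le_cosh t) hcosh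
    (by linarith) (by linarith : 2 - s ≤ 2)
  calc |subordinationIntegrand s μ t|
      = |1 - exp (-μ * t) * cosh t * (t / sinh t) ^ (2 - s)| * t ^ (s - 2) := by
        rw [subordinationIntegrand, abs_mul, abs_of_pos (rpow_pos_of_pos ht0 _)]
    _ ≤ (μ + 1) * t * t ^ (s - 2) := by gcongr
    _ = (μ + 1) * t ^ (s - 1) := by
        rw [show s - 1 = s - 2 + 1 by ring, rpow_add_one ht0.ne']; ring

lemma abs_subordinationIntegrand_le_of_one_le (hs : s ≤ 1) (ht : 1 ≤ t) :
    |subordinationIntegrand s μ t| ≤ t ^ (s - 2) + 2 * exp (-μ * t) := by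
  have ht0 : 0 < t := by linarith
  have hsinh : 1 ≤ sinh t := ht.trans (self_le_sinh_iff.2 ht0.le)
  have hdecay : cosh t * sinh t ^ (s - 2) ≤ 2 := by
    calc cosh t * sinh t ^ (s - 2) ≤ 2 * sinh t * sinh t ^ (s - 2) := by
          gcongr; exact cosh_le_two_mul_sinh ht
      _ = 2 * sinh t ^ (s - 1) := by
          rw [show s - 1 = s - 2 + 1 by ring, rpow_add_one (by linarith)]; ring
      _ ≤ 2 := by
          have := rpow_le_one_of_one_le_of_nonpos hsinh (by linarith : s - 1 ≤ 0); linarith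
  rw [subordinationIntegrand_eq ht0]
  refine (abs_sub _ _).trans (add_le_add (abs_of_pos (rpow_pos_of_pos ht0 _)).le ?_)
  rw [abs_of_pos (by positivity), mul_assoc, mul_comm 2]
  exact mul_le_mul_of_nonneg_left hdecay (exp_pos _).le

lemma integrableOn_subordinationIntegrand (hs0 : 0 < s) (hs1 : s < 1) (hμ : 0 < μ) :
    IntegrableOn (subordinationIntegrand s μ) (Ioi 0) :=
  integrableOn_Ioi_zero_of_norm_le hs0 (by unfold subordinationIntegrand; fun_prop)
    (fun _ ht => abs_subordinationIntegrand_le hs0.le (by linarith) hμ.le ht.1 ht.2)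
    ((integrableOn_Ioi_rpow_of_lt (by linarith) zero_lt_one).add
      ((exp_neg_integrableOn_Ioi 1 hμ).const_mul 2))
    fun _ ht => abs_subordinationIntegrand_le_of_one_le hs1.le (le_of_lt ht)

end SubordinationIntegrand

section ExpMulSinhRpow
variable {s μ : ℝ}

lemma integrableOn_exp_mul_sinh_rpow (hs0 : 0 < s) (hs1 : s ≤ 1) (hμ : 0 < μ) :
    IntegrableOn (fun t => exp (-μ * t) * sinh t ^ (s - 1)) (Ioi 0) := by
  refine integrableOn_Ioi_zero_of_norm_le (C := 1) hs0 (by fun_prop) (fun t ⟨ht0, ht1⟩ => ?_)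
    (exp_neg_integrableOn_Ioi 1 hμ) fun t (ht : 1 < t) => ?_
  · rw [norm_of_nonneg (by positivity)]
    exact mul_le_mul (exp_le_one_iff.2 (by nlinarith))
      (rpow_le_rpow_of_nonpos ht0 (self_le_sinh_iff.2 ht0.le) (by linarith)) (by positivity)
      zero_le_one
  · have hsinh : 1 ≤ sinh t := ht.le.trans (self_le_sinh_iff.2 (by linarith))
    rw [norm_of_nonneg (by positivity)]
    exact mul_le_of_le_one_right (exp_pos _).le
      (rpow_le_one_of_one_le_of_nonpos hsinh (by linarith))

lemma hasDerivAt_exp_mul_sinh_rpow_sub_rpow {t : ℝ} (ht : 0 < t) :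
    HasDerivAt (fun t => exp (-μ * t) * sinh t ^ (s - 1) - t ^ (s - 1))
      ((1 - s) * subordinationIntegrand s μ t - μ * (exp (-μ * t) * sinh t ^ (s - 1))) t := by
  have hexp := ((hasDerivAt_id t).const_mul (-μ)).exp
  have hsinh := (hasDerivAt_sinh t).rpow_const (p := s - 1) (Or.inl (sinh_pos_iff.2 ht).ne')
  have hpow := hasDerivAt_rpow_const (x := t) (p := s - 1) (Or.inl ht.ne')
  refine ((hexp.mul hsinh).sub hpow).congr_deriv ?_
  rw [subordinationIntegrand_eq ht, show s - 1 - 1 = s - 2 by ring, id]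
  ring

lemma abs_exp_mul_sinh_rpow_sub_rpow_le (hs0 : -1 ≤ s) (hs1 : s ≤ 1) (hμ : 0 ≤ μ) {t : ℝ}
    (ht0 : 0 < t) (ht1 : t ≤ 1) :
    |exp (-μ * t) * sinh t ^ (s - 1) - t ^ (s - 1)| ≤ (μ + 1) * t ^ s := by
  have h := abs_one_sub_exp_mul_mul_div_sinh_rpow_le hμ ht0 ht1 le_rfl
    (le_add_of_nonneg_right (sq_nonneg t)) (by linarith : 0 ≤ 1 - s) (by linarith)
  have hfactor : exp (-μ * t) * sinh t ^ (s - 1) - t ^ (s - 1)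
      = -((1 - exp (-μ * t) * 1 * (t / sinh t) ^ (1 - s)) * t ^ (s - 1)) := by
    rw [sinh_rpow_eq_div_sinh_rpow_mul ht0, neg_sub]; ring
  calc |exp (-μ * t) * sinh t ^ (s - 1) - t ^ (s - 1)|
      = |1 - exp (-μ * t) * 1 * (t / sinh t) ^ (1 - s)| * t ^ (s - 1) := by
        rw [hfactor, abs_neg, abs_mul, abs_of_pos (rpow_pos_of_pos ht0 _)]
    _ ≤ (μ + 1) * t * t ^ (s - 1) := by gcongr
    _ = (μ + 1) * t ^ s := by
        rw [mul_assoc, mul_comm t, ← rpow_add_one ht0.ne']; ring_nf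

lemma continuousWithinAt_exp_mul_sinh_rpow_sub_rpow (hs0 : 0 < s) (hs1 : s ≤ 1) (hμ : 0 ≤ μ) :
    ContinuousWithinAt (fun t => exp (-μ * t) * sinh t ^ (s - 1) - t ^ (s - 1)) (Ici 0) 0 := by
  have hpow : Tendsto (fun t : ℝ => (μ + 1) * t ^ s) (𝓝[Ici 0] 0) (𝓝 0) := by
    simpa [zero_rpow hs0.ne'] using
      ((continuousAt_rpow_const 0 s (Or.inr hs0.le)).const_mul (μ + 1)).tendsto.mono_left
        nhdsWithin_le_nhds
  have hF0 : exp (-μ * 0) * sinh 0 ^ (s - 1) - (0 : ℝ) ^ (s - 1) = 0 := by simp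
  rw [ContinuousWithinAt, hF0]
  refine squeeze_zero_norm' ?_ hpow
  filter_upwards [Icc_mem_nhdsGE zero_lt_one] with t ⟨ht0, ht1⟩
  rcases ht0.eq_or_lt with rfl | ht0
  · simp [zero_rpow hs0.ne']
  · exact abs_exp_mul_sinh_rpow_sub_rpow_le (by linarith) hs1 hμ ht0 ht1

lemma tendsto_exp_mul_sinh_rpow_sub_rpow_atTop (hs1 : s < 1) (hμ : 0 < μ) :
    Tendsto (fun t => exp (-μ * t) * sinh t ^ (s - 1) - t ^ (s - 1)) atTop (𝓝 0) := by
  have hexp : Tendsto (fun t => exp (-μ * t)) atTop (𝓝 0) :=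
    tendsto_exp_atBot.comp (tendsto_id.const_mul_atTop_of_neg (neg_neg_of_pos hμ))
  have hdamped : Tendsto (fun t => exp (-μ * t) * sinh t ^ (s - 1)) atTop (𝓝 0) := by
    have hsinh : ∀ᶠ t in atTop, 1 ≤ sinh t := by
      filter_upwards [eventually_ge_atTop 1] with t ht
      exact ht.trans (self_le_sinh_iff.2 (by linarith))
    refine squeeze_zero' (hsinh.mono fun t ht => by positivity) ?_ hexp
    filter_upwards [hsinh] with t ht
    exact mul_le_of_le_one_right (exp_pos _).le
      (rpow_le_one_of_one_le_of_nonpos ht (by linarith))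
  have hpow : Tendsto (fun t : ℝ => t ^ (s - 1)) atTop (𝓝 0) := by
    simpa only [neg_sub] using tendsto_rpow_neg_atTop (by linarith : 0 < 1 - s)
  simpa only [sub_zero] using hdamped.sub hpow

lemma one_sub_mul_integral_subordinationIntegrand (hs0 : 0 < s) (hs1 : s < 1) (hμ : 0 < μ) :
    (1 - s) * ∫ t in Ioi 0, subordinationIntegrand s μ t
      = μ * ∫ t in Ioi 0, exp (-μ * t) * sinh t ^ (s - 1) := by
  have hint := (integrableOn_subordinationIntegrand hs0 hs1 hμ).const_mul (1 - s)
  have hG := (integrableOn_exp_mul_sinh_rpow hs0 hs1.le hμ).const_mul μ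
  have hftc := integral_Ioi_of_hasDerivAt_of_tendsto
    (continuousWithinAt_exp_mul_sinh_rpow_sub_rpow hs0 hs1.le hμ.le)
    (fun t ht => hasDerivAt_exp_mul_sinh_rpow_sub_rpow ht) (hint.sub hG)
    (tendsto_exp_mul_sinh_rpow_sub_rpow_atTop hs1 hμ)
  rw [integral_sub hint hG, integral_const_mul, integral_const_mul] at hftc
  simp only [sinh_zero, zero_rpow (by linarith : s - 1 ≠ 0), mul_zero, sub_self] at hftc
  linarith

end ExpMulSinhRpow

lemma image_exp_neg_two_mul_Ioi : (fun t => exp (-2 * t)) '' Ioi 0 = Ioo 0 1 := by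
  ext x
  simp only [mem_image, mem_Ioi, mem_Ioo]
  constructor
  · rintro ⟨t, ht, rfl⟩
    exact ⟨exp_pos _, exp_lt_one_iff.2 (by linarith)⟩
  · rintro ⟨hx0, hx1⟩
    refine ⟨-log x / 2, by linarith [log_neg hx0 hx1], ?_⟩
    rw [show -2 * (-log x / 2) = log x by ring, exp_log hx0]

lemma integral_Ioo_zero_one_eq_integral_Ioi_exp {E : Type*} [NormedAddCommGroup E]
    [NormedSpace ℝ E] (g : ℝ → E) :
    ∫ x in Ioo 0 1, g x = ∫ t in Ioi 0, (2 * exp (-2 * t)) • g (exp (-2 * t)) := by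
  have hderiv : ∀ t ∈ Ioi (0 : ℝ),
      HasDerivWithinAt (fun t => exp (-2 * t)) (-2 * exp (-2 * t)) (Ioi 0) t := fun t _ =>
    ((((hasDerivAt_id t).const_mul (-2)).exp).congr_deriv (by simp [mul_comm])).hasDerivWithinAt
  have hinj : InjOn (fun t => exp (-2 * t)) (Ioi 0) := fun x _ y _ h => by
    simpa using exp_injective h
  rw [← image_exp_neg_two_mul_Ioi, integral_image_eq_integral_abs_deriv_smul measurableSet_Ioi
    hderiv hinj]
  refine setIntegral_congr_fun measurableSet_Ioi fun t _ => ?_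
  rw [abs_mul, abs_of_pos (exp_pos _)]
  norm_num

lemma integral_exp_mul_sinh_rpow {b μ : ℝ} (hb : 0 < b) (hμ : b - 1 < μ) :
    ∫ t in Ioi 0, exp (-μ * t) * sinh t ^ (b - 1)
      = 2 ^ (-b) * Gamma b * Gamma ((μ + 1 - b) / 2) / Gamma ((μ + 1 + b) / 2) := by
  have hkernel : ∀ t ∈ Ioi (0 : ℝ),
      (2 * exp (-2 * t)) • (exp (-2 * t) ^ ((μ + 1 - b) / 2 - 1) * (1 - exp (-2 * t)) ^ (b - 1))
        = 2 ^ b * (exp (-μ * t) * sinh t ^ (b - 1)) := by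
    intro t ht
    have htwo : (2 : ℝ) ^ b * 2 ^ (-(b - 1)) = 2 := by rw [← rpow_add two_pos]; norm_num
    have hexp : exp (-2 * t) * exp (-2 * t * ((μ + 1 - b) / 2 - 1))
        = exp (-μ * t) * exp ((b - 1) * t) := by
      rw [← exp_add, ← exp_add]; ring_nf
    rw [smul_eq_mul, ← exp_mul, sinh_rpow_eq_exp_mul (le_of_lt ht)]
    linear_combination (2 * (1 - exp (-2 * t)) ^ (b - 1)) * hexp
      - (exp (-μ * t) * exp ((b - 1) * t) * (1 - exp (-2 * t)) ^ (b - 1)) * htwo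
  have hbeta := integral_rpow_mul_one_sub_rpow (a := (μ + 1 - b) / 2) (by linarith) hb
  rw [integral_Ioo_zero_one_eq_integral_Ioi_exp, setIntegral_congr_fun measurableSet_Ioi hkernel,
    integral_const_mul, show (μ + 1 - b) / 2 + b = (μ + 1 + b) / 2 by ring] at hbeta
  calc ∫ t in Ioi 0, exp (-μ * t) * sinh t ^ (b - 1)
      = 2 ^ (-b) * (2 ^ b * ∫ t in Ioi 0, exp (-μ * t) * sinh t ^ (b - 1)) := by
        rw [← mul_assoc, ← rpow_add two_pos]; simp
    _ = 2 ^ (-b) * Gamma b * Gamma ((μ + 1 - b) / 2) / Gamma ((μ + 1 + b) / 2) := by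
        rw [hbeta]; ring

/-- Subordination identity for Λ_{1−s} = ℒ_s^{−1}ℒ (key step in the proof of
Proposition 4.3):
(1−s) ∫₀^∞ (1 − e^{−μt} cosh t (t/sinh t)^{2−s}) t^{s−2} dt
  = 2^{−s} μ Γ(s) Γ((μ+1−s)/2) / Γ((μ+1+s)/2). -/
theorem subordination_identity_homogeneous (s μ : ℝ)
    (hs0 : 0 < s) (hs1 : s < 1) (hμ : 0 < μ) :
    IntegrableOn (fun t : ℝ =>
        (1 - Real.exp (-μ * t) * Real.cosh t * (t / Real.sinh t) ^ (2 - s)) * t ^ (s - 2))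
      (Set.Ioi (0 : ℝ)) volume ∧
    (1 - s) * ∫ t in Set.Ioi (0 : ℝ),
        (1 - Real.exp (-μ * t) * Real.cosh t * (t / Real.sinh t) ^ (2 - s)) * t ^ (s - 2)
      = (2 : ℝ) ^ (-s) * μ * Real.Gamma s * Real.Gamma ((μ + 1 - s) / 2) /
          Real.Gamma ((μ + 1 + s) / 2) := by
  refine ⟨integrableOn_subordinationIntegrand hs0 hs1 hμ, ?_⟩
  refine (one_sub_mul_integral_subordinationIntegrand hs0 hs1 hμ).trans ?_
  rw [integral_exp_mul_sinh_rpow hs0 (by linarith)]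
  ring
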